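/- arXiv:1210.5561 — 3 statements merged into one kernel-verified Lean document; each statement's English description precedes it below -/
import Mathlib

section
/- The number of edges of the Hasse diagram of the poset of independent subsets of the h-th power of a path on n vertices, ordered by inclusion, equals the sum over k ≥ 1 of k * C(n - h*k + h, k). -/
/-- Independent subsets of the h-th power of the path on n vertices:
subsets of {1,...,n} with all pairwise differences of distinct elements greater than h. -/
def pathSubsets (n h : ℕ) : Finset (Finset ℕ) :=
  (Finset.Icc 1 n).powerset.filter (fun S => ∀ i ∈ S, ∀ j ∈ S, i < j → i + h < j)

def pathCount (n h k : ℕ) : ℕ := ((pathSubsets n h).filter (fun S => S.card = k)).card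

def pathTotal (n h : ℕ) : ℕ := (pathSubsets n h).card

/-- Independent subsets of the h-th power of the cycle on n vertices:
subsets S of {1,...,n} with h < |i-j| < n-h for all distinct i,j ∈ S. -/
def cycleSubsets (n h : ℕ) : Finset (Finset ℕ) :=
  (Finset.Icc 1 n).powerset.filter
    (fun S => ∀ i ∈ S, ∀ j ∈ S, i < j → i + h < j ∧ j + h < n + i)

def cycleCount (n h k : ℕ) : ℕ := ((cycleSubsets n h).filter (fun S => S.card = k)).card

def cycleTotal (n h : ℕ) : ℕ := (cycleSubsets n h).card

/-- Number of edges of the Hasse diagram of independent subsets of Pₙ⁽ʰ⁾ ordered by inclusion. -/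
def pathEdges (n h : ℕ) : ℕ :=
  (((pathSubsets n h) ×ˢ (pathSubsets n h)).filter
    (fun p => p.1 ⊆ p.2 ∧ p.2.card = p.1.card + 1)).card

/-- Number of edges of the Hasse diagram of independent subsets of Cₙ⁽ʰ⁾ ordered by inclusion. -/
def cycleEdges (n h : ℕ) : ℕ :=
  (((cycleSubsets n h) ×ˢ (cycleSubsets n h)).filter
    (fun p => p.1 ⊆ p.2 ∧ p.2.card = p.1.card + 1)).card

/-!
In the Hasse diagram of a down-closed family of finite sets, a set `T` covers exactly
`|T|` sets, namely the `T \ {a}` for `a ∈ T`; so the number of edges is `∑ k · f(k)`, where `f(k)`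
counts the independent `k`-sets. Splitting the independent `(k+1)`-subsets of `{1, …, n+1}`
according to whether they contain `n+1` (forcing the other elements into `{1, …, n-h}`) gives
`f(n+1, k+1) = f(n, k+1) + f(n-h, k)`, which is Pascal's rule for `C(n + h - h k, k)`.
-/

open Finset

lemma Finset.covBy_iff_subset_and_card_eq_add_one {α : Type*} [DecidableEq α]
    {s t : Finset α} : s ⋖ t ↔ s ⊆ t ∧ #t = #s + 1 := by
  rw [covBy_iff_card_sdiff_eq_one]
  refine and_congr_right fun hst => ?_
  have := card_le_card hst
  rw [card_sdiff_of_subset hst]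
  omega

section LowerSet

variable {α : Type*} [DecidableEq α] {F : Finset (Finset α)}

lemma card_filter_covBy_of_isLowerSet (hF : IsLowerSet (F : Set (Finset α))) {t : Finset α}
    (ht : t ∈ F) : #{s ∈ F | s ⊆ t ∧ #t = #s + 1} = #t := by
  have hfiber : {s ∈ F | s ⊆ t ∧ #t = #s + 1} = t.image t.erase := by
    ext s
    rw [mem_filter, mem_image, ← covBy_iff_subset_and_card_eq_add_one, covBy_iff_exists_erase]
    constructor
    · exact fun hs => hs.2
    · rintro ⟨a, ha, rfl⟩
      exact ⟨hF (erase_subset a t) ht, a, ha, rfl⟩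
  rw [hfiber, card_image_of_injOn t.erase_injOn]

lemma card_filter_covBy_product_of_isLowerSet (hF : IsLowerSet (F : Set (Finset α))) :
    #{p ∈ F ×ˢ F | p.1 ⊆ p.2 ∧ #p.2 = #p.1 + 1} = ∑ t ∈ F, #t := by
  rw [card_filter, sum_product_right]
  refine sum_congr rfl fun t ht => ?_
  rw [← card_filter, card_filter_covBy_of_isLowerSet hF ht]

end LowerSet

section PathSubsets

variable {n h k : ℕ} {S : Finset ℕ}

lemma mem_pathSubsets :
    S ∈ pathSubsets n h ↔ (∀ x ∈ S, 1 ≤ x ∧ x ≤ n) ∧ ∀ i ∈ S, ∀ j ∈ S, i < j → i + h < j := by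
  simp [pathSubsets, subset_iff, forall_and]

lemma isLowerSet_pathSubsets : IsLowerSet (pathSubsets n h : Set (Finset ℕ)) := by
  intro T S hST hT
  simp only [mem_coe, mem_pathSubsets] at hT ⊢
  exact ⟨fun x hx => hT.1 x (hST hx), fun i hi j hj => hT.2 i (hST hi) j (hST hj)⟩

lemma pathEdges_eq_sum_card : pathEdges n h = ∑ T ∈ pathSubsets n h, #T :=
  card_filter_covBy_product_of_isLowerSet isLowerSet_pathSubsets

lemma notMem_of_mem_pathSubsets {x : ℕ} (hS : S ∈ pathSubsets n h) (hx : n < x) : x ∉ S :=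
  fun hxS => by have := (mem_pathSubsets.1 hS).1 x hxS; omega

lemma mem_pathSubsets_succ_iff_of_notMem (hS : n + 1 ∉ S) :
    S ∈ pathSubsets (n + 1) h ↔ S ∈ pathSubsets n h := by
  simp only [mem_pathSubsets]
  refine and_congr_left fun _ => forall₂_congr fun x hx => ?_
  have : x ≠ n + 1 := fun hxn => hS (hxn ▸ hx)
  omega

lemma insert_mem_pathSubsets_succ_iff (hS : n + 1 ∉ S) :
    insert (n + 1) S ∈ pathSubsets (n + 1) h ↔ S ∈ pathSubsets (n - h) h := by
  simp only [mem_pathSubsets, forall_mem_insert]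
  constructor
  · rintro ⟨⟨-, hbound⟩, -, hsep⟩
    refine ⟨fun x hx => ?_, fun i hi j hj => (hsep i hi).2 j hj⟩
    have : x ≠ n + 1 := fun hxn => hS (hxn ▸ hx)
    have := hbound x hx
    have := (hsep x hx).1
    omega
  · rintro ⟨hbound, hsep⟩
    refine ⟨⟨by omega, fun x hx => by have := hbound x hx; omega⟩,
      ⟨by omega, fun j hj _ => by have := hbound j hj; omega⟩,
      fun i hi => ⟨fun _ => by have := hbound i hi; omega, hsep i hi⟩⟩

lemma pathCount_zero_right : pathCount n h 0 = 1 := by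
  rw [pathCount, card_eq_one]
  refine ⟨∅, eq_singleton_iff_unique_mem.2 ⟨?_, fun S hS => card_eq_zero.1 (mem_filter.1 hS).2⟩⟩
  simp [mem_pathSubsets]

lemma pathCount_zero_succ : pathCount 0 h (k + 1) = 0 := by
  rw [pathCount, card_eq_zero, filter_eq_empty_iff]
  intro S hS hcard
  obtain ⟨x, hx⟩ := card_pos.1 (by omega : 0 < #S)
  have := (mem_pathSubsets.1 hS).1 x hx
  omega

lemma pathCount_succ_succ :
    pathCount (n + 1) h (k + 1) = pathCount n h (k + 1) + pathCount (n - h) h k := by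
  rw [pathCount, ← card_filter_add_card_filter_not (p := fun S => n + 1 ∉ S)]
  congr 1
  · congr 1
    ext S
    simp only [mem_filter]
    constructor
    · rintro ⟨⟨hS, hcard⟩, hn⟩
      exact ⟨(mem_pathSubsets_succ_iff_of_notMem hn).1 hS, hcard⟩
    · rintro ⟨hS, hcard⟩
      have hn := notMem_of_mem_pathSubsets hS n.lt_succ_self
      exact ⟨⟨(mem_pathSubsets_succ_iff_of_notMem hn).2 hS, hcard⟩, hn⟩
  · refine card_nbij' (·.erase (n + 1)) (insert (n + 1)) ?_ ?_ ?_ ?_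
    · intro S hS
      simp only [mem_coe, mem_filter, not_not] at hS ⊢
      obtain ⟨⟨hS, hcard⟩, hn⟩ := hS
      rw [← insert_mem_pathSubsets_succ_iff (notMem_erase _ _), insert_erase hn]
      exact ⟨hS, by rw [card_erase_of_mem hn, hcard]; rfl⟩
    · intro S hS
      simp only [mem_coe, mem_filter, not_not] at hS ⊢
      obtain ⟨hS, hcard⟩ := hS
      have hn := notMem_of_mem_pathSubsets hS (by omega : n - h < n + 1)
      exact ⟨⟨(insert_mem_pathSubsets_succ_iff hn).2 hS, by rw [card_insert_of_notMem hn, hcard]⟩,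
        mem_insert_self _ _⟩
    · intro S hS
      simp only [mem_coe, mem_filter, not_not] at hS
      exact insert_erase hS.2
    · intro S hS
      simp only [mem_coe, mem_filter] at hS
      exact erase_insert (notMem_of_mem_pathSubsets hS.1 (by omega))

end PathSubsets

lemma choose_add_sub_mul_pascal (n h k : ℕ) :
    (n + 1 + h - h * (k + 1)).choose (k + 1) =
      (n + h - h * (k + 1)).choose (k + 1) + (n - h + h - h * k).choose k := by
  rw [mul_add_one]
  obtain rfl | hk := k.eq_zero_or_pos
  · simp only [mul_zero, zero_add, Nat.choose_one_right, Nat.choose_zero_right]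
    omega
  have hhk : h ≤ h * k := Nat.le_mul_of_pos_right h hk
  rcases le_or_gt (h * k) n with hn | hn
  · rw [show n + 1 + h - (h * k + h) = n - h * k + 1 by omega,
      show n + h - (h * k + h) = n - h * k by omega, show n - h + h - h * k = n - h * k by omega,
      Nat.choose_succ_succ', add_comm]
  · rw [show n + 1 + h - (h * k + h) = 0 by omega, show n + h - (h * k + h) = 0 by omega,
      show n - h + h - h * k = 0 by omega, Nat.choose_eq_zero_of_lt hk, add_zero]

theorem pathCount_eq_choose (n h k : ℕ) : pathCount n h k = (n + h - h * k).choose k := by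
  induction n using Nat.strong_induction_on generalizing k with
  | _ n ih =>
    rcases k with _ | k
    · rw [pathCount_zero_right, Nat.choose_zero_right]
    rcases n with _ | n
    · rw [pathCount_zero_succ, Nat.choose_eq_zero_of_lt (by rw [mul_add_one]; omega)]
    rw [pathCount_succ_succ, ih n (by omega), ih (n - h) (by omega), choose_add_sub_mul_pascal]

lemma sum_card_pathSubsets (n h : ℕ) :
    ∑ T ∈ pathSubsets n h, #T = ∑ k ∈ range (n + 1), k * pathCount n h k := by
  have hcard : ∀ T ∈ pathSubsets n h, #T ∈ range (n + 1) := fun T hT => by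
    have := card_le_card (mem_powerset.1 (mem_filter.1 hT).1)
    rw [Nat.card_Icc] at this
    exact mem_range.2 (by omega)
  rw [← sum_fiberwise_of_maps_to hcard]
  refine sum_congr rfl fun k _ => ?_
  rw [sum_const_nat fun T hT => (mem_filter.1 hT).2, mul_comm, pathCount]

theorem stmt6 (n h : ℕ) :
    pathEdges n h = ∑ k ∈ Finset.Icc 1 n, k * Nat.choose (n + h - h * k) k := by
  rw [pathEdges_eq_sum_card, sum_card_pathSubsets]
  simp_rw [pathCount_eq_choose]
  refine (sum_subset (fun k hk => ?_) fun k hk hk' => ?_).symm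
  · exact mem_range.2 (by have := (mem_Icc.1 hk).2; omega)
  · obtain rfl : k = 0 := by simp only [mem_range, mem_Icc, not_and_or, not_le] at hk hk'; omega
    rw [zero_mul]
end

section
/- The number of independent k-subsets of the h-th power of a path on n vertices containing the vertex i equals the sum over r from 0 to k-1 of p̄(i-h-1, r) * p̄(n-i-h, k-1-r), where p̄(m, r) is the number of independent r-subsets of the h-th power of a path on max(m, 0) vertices. -/
/-!
An independent set `S` of the `h`-th power of the path that contains `i` has no other element
within distance `h` of `i`. Cutting `S` at `i` therefore gives an independent subset of
`{1, …, i - h - 1}` and, after shifting down by `i + h`, an independent subset of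
`{1, …, n - i - h}`, whose sizes add up to `k - 1`; gluing such a pair back around `i` inverts
the cut. Counting the pairs by the size of the left part gives the convolution.
-/

open Finset

def IsSpread (h : ℕ) (S : Finset ℕ) : Prop := ∀ a ∈ S, ∀ b ∈ S, a < b → a + h < b

section Spread

variable {h : ℕ} {A B S : Finset ℕ}

theorem mem_pathSubsets_s8 {n : ℕ} : S ∈ pathSubsets n h ↔ S ⊆ Icc 1 n ∧ IsSpread h S := by
  rw [pathSubsets, mem_filter, mem_powerset, IsSpread]

theorem IsSpread.mono (hB : IsSpread h B) (hAB : A ⊆ B) : IsSpread h A :=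
  fun a ha b hb => hB a (hAB ha) b (hAB hb)

theorem IsSpread.union (hA : IsSpread h A) (hB : IsSpread h B)
    (hAB : ∀ a ∈ A, ∀ b ∈ B, a + h < b) : IsSpread h (A ∪ B) := by
  intro a ha b hb hab
  rcases mem_union.1 ha with ha | ha <;> rcases mem_union.1 hb with hb | hb
  · exact hA a ha b hb hab
  · exact hAB a ha b hb
  · have := hAB b hb a ha; omega
  · exact hB a ha b hb hab

theorem IsSpread.map_addRight (hS : IsSpread h S) (c : ℕ) :
    IsSpread h (S.map (addRightEmbedding c)) := by
  simp only [IsSpread, mem_map, addRightEmbedding_apply, forall_exists_index, and_imp]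
  rintro _ a ha rfl _ b hb rfl hab
  have := hS a ha b hb (by omega)
  omega

theorem isSpread_insert_of_lt {i : ℕ} (hS : IsSpread h S) (hiS : ∀ b ∈ S, i + h < b) :
    IsSpread h (insert i S) := by
  rw [insert_eq]
  exact IsSpread.union (by simp [IsSpread]) hS (by simpa using hiS)

end Spread

def joinAt (h i : ℕ) (p : Finset ℕ × Finset ℕ) : Finset ℕ :=
  p.1 ∪ insert i (p.2.map (addRightEmbedding (i + h)))

def splitAt (h i : ℕ) (S : Finset ℕ) : Finset ℕ × Finset ℕ :=
  (S.filter (· < i), (S.filter (i < ·)).image (· - (i + h)))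

section JoinSplit

variable {h i : ℕ} {p : Finset ℕ × Finset ℕ} {S : Finset ℕ}

theorem mem_joinAt {x : ℕ} :
    x ∈ joinAt h i p ↔ x ∈ p.1 ∨ x = i ∨ ∃ b ∈ p.2, b + (i + h) = x := by
  simp [joinAt, or_left_comm]

theorem filter_lt_joinAt (hA : ∀ a ∈ p.1, a < i) :
    (joinAt h i p).filter (· < i) = p.1 := by
  ext x
  simp only [mem_filter, mem_joinAt]
  constructor
  · rintro ⟨hx | rfl | ⟨b, -, rfl⟩, hxi⟩
    · exact hx
    all_goals omega
  · exact fun hx => ⟨.inl hx, hA x hx⟩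

theorem filter_gt_joinAt (hA : ∀ a ∈ p.1, a < i) (hB : ∀ b ∈ p.2, 0 < b) :
    (joinAt h i p).filter (i < ·) = p.2.map (addRightEmbedding (i + h)) := by
  ext x
  simp only [mem_filter, mem_joinAt, mem_map, addRightEmbedding_apply]
  constructor
  · rintro ⟨hx | rfl | hx, hix⟩
    · exact absurd (hA x hx) (by omega)
    · omega
    · exact hx
  · rintro ⟨b, hb, rfl⟩
    exact ⟨.inr (.inr ⟨b, hb, rfl⟩), by have := hB b hb; omega⟩

theorem splitAt_joinAt (hA : ∀ a ∈ p.1, a < i) (hB : ∀ b ∈ p.2, 0 < b) :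
    splitAt h i (joinAt h i p) = p := by
  rw [splitAt, filter_lt_joinAt hA, filter_gt_joinAt hA hB, map_eq_image, image_image]
  simp [Function.comp_def]

theorem joinAt_splitAt (hS : IsSpread h S) (hiS : i ∈ S) : joinAt h i (splitAt h i S) = S := by
  ext x
  simp only [splitAt, mem_joinAt, mem_filter, mem_image]
  constructor
  · rintro (⟨hx, -⟩ | rfl | ⟨-, ⟨y, ⟨hy, hiy⟩, rfl⟩, rfl⟩)
    · exact hx
    · exact hiS
    · rwa [Nat.sub_add_cancel (hS i hiS y hy hiy).le]
  · intro hx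
    rcases lt_trichotomy x i with hxi | rfl | hix
    · exact .inl ⟨hx, hxi⟩
    · exact .inr (.inl rfl)
    · exact .inr (.inr ⟨_, ⟨x, ⟨hx, hix⟩, rfl⟩, Nat.sub_add_cancel (hS i hiS x hx hix).le⟩)

theorem card_joinAt (hA : ∀ a ∈ p.1, a < i) (hB : ∀ b ∈ p.2, 0 < b) :
    (joinAt h i p).card = p.1.card + p.2.card + 1 := by
  have hi : i ∉ p.2.map (addRightEmbedding (i + h)) := by
    simp only [mem_map, addRightEmbedding_apply, not_exists, not_and]
    intro b hb
    have := hB b hb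
    omega
  have hdisj : Disjoint p.1 (insert i (p.2.map (addRightEmbedding (i + h)))) := by
    rw [disjoint_left]
    intro a ha
    simp only [mem_insert, mem_map, addRightEmbedding_apply, not_or, not_exists, not_and]
    have := hA a ha
    exact ⟨by omega, fun b _ => by omega⟩
  rw [joinAt, card_union_of_disjoint hdisj, card_insert_of_notMem hi, card_map, add_assoc]

end JoinSplit

section Pivot

variable {n h i : ℕ}

theorem joinAt_mem_pathSubsets (hi1 : 1 ≤ i) (hi2 : i ≤ n) {p : Finset ℕ × Finset ℕ}
    (hA : p.1 ∈ pathSubsets (i - h - 1) h) (hB : p.2 ∈ pathSubsets (n - i - h) h) :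
    joinAt h i p ∈ pathSubsets n h := by
  rw [mem_pathSubsets_s8] at hA hB ⊢
  obtain ⟨hAI, hAs⟩ := hA
  obtain ⟨hBI, hBs⟩ := hB
  refine ⟨fun x hx => ?_, hAs.union (isSpread_insert_of_lt (hBs.map_addRight _) ?_) ?_⟩
  · rw [mem_joinAt] at hx
    rw [mem_Icc]
    rcases hx with hx | rfl | ⟨b, hb, rfl⟩
    · have := mem_Icc.1 (hAI hx); omega
    · omega
    · have := mem_Icc.1 (hBI hb); omega
  · simp only [mem_map, addRightEmbedding_apply, forall_exists_index, and_imp]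
    rintro _ b hb rfl
    have := mem_Icc.1 (hBI hb); omega
  · intro a ha x hx
    have := mem_Icc.1 (hAI ha)
    simp only [mem_insert, mem_map, addRightEmbedding_apply] at hx
    rcases hx with rfl | ⟨b, -, rfl⟩ <;> omega

theorem fst_splitAt_mem_pathSubsets {S : Finset ℕ} (hS : S ∈ pathSubsets n h) (hiS : i ∈ S) :
    (splitAt h i S).1 ∈ pathSubsets (i - h - 1) h := by
  rw [mem_pathSubsets_s8] at hS ⊢
  refine ⟨fun x hx => ?_, hS.2.mono (filter_subset _ S)⟩
  rw [splitAt, mem_filter] at hx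
  have := mem_Icc.1 (hS.1 hx.1)
  have := hS.2 x hx.1 i hiS hx.2
  rw [mem_Icc]
  omega

theorem snd_splitAt_mem_pathSubsets {S : Finset ℕ} (hS : S ∈ pathSubsets n h) (hiS : i ∈ S) :
    (splitAt h i S).2 ∈ pathSubsets (n - i - h) h := by
  rw [mem_pathSubsets_s8] at hS ⊢
  obtain ⟨hSI, hSs⟩ := hS
  simp only [splitAt, subset_iff, IsSpread, mem_image, mem_filter, mem_Icc]
  constructor
  · rintro _ ⟨y, ⟨hy, hiy⟩, rfl⟩
    have := mem_Icc.1 (hSI hy)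
    have := hSs i hiS y hy hiy
    omega
  · rintro _ ⟨y, ⟨hy, hiy⟩, rfl⟩ _ ⟨z, ⟨hz, hiz⟩, rfl⟩ hyz
    have := hSs i hiS y hy hiy
    have := hSs y hy z hz (by omega)
    omega

theorem card_pathSubsets_containing_eq_card_pairs (hi1 : 1 ≤ i) (hi2 : i ≤ n) (k : ℕ) :
    ((pathSubsets n h).filter (fun S => S.card = k ∧ i ∈ S)).card =
      ((pathSubsets (i - h - 1) h ×ˢ pathSubsets (n - i - h) h).filter
        (fun p => p.1.card + p.2.card + 1 = k)).card := by
  have lt_pivot {A : Finset ℕ} (hA : A ∈ pathSubsets (i - h - 1) h) : ∀ a ∈ A, a < i :=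
    fun a ha => by have := mem_Icc.1 ((mem_pathSubsets_s8.1 hA).1 ha); omega
  have pos {B : Finset ℕ} (hB : B ∈ pathSubsets (n - i - h) h) : ∀ b ∈ B, 0 < b :=
    fun b hb => (mem_Icc.1 ((mem_pathSubsets_s8.1 hB).1 hb)).1
  refine card_nbij' (splitAt h i) (joinAt h i) ?_ ?_ ?_ ?_
  · rintro S hS
    simp only [mem_coe, mem_filter, mem_product] at hS ⊢
    obtain ⟨hS, rfl, hiS⟩ := hS
    have hA' := fst_splitAt_mem_pathSubsets hS hiS
    have hB' := snd_splitAt_mem_pathSubsets hS hiS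
    refine ⟨⟨hA', hB'⟩, ?_⟩
    conv_rhs => rw [← joinAt_splitAt (mem_pathSubsets_s8.1 hS).2 hiS]
    exact (card_joinAt (lt_pivot hA') (pos hB')).symm
  · rintro p hp
    simp only [mem_coe, mem_filter, mem_product] at hp ⊢
    obtain ⟨⟨hA', hB'⟩, rfl⟩ := hp
    exact ⟨joinAt_mem_pathSubsets hi1 hi2 hA' hB', card_joinAt (lt_pivot hA') (pos hB'),
      mem_joinAt.2 (.inr (.inl rfl))⟩
  · rintro S hS
    simp only [mem_coe, mem_filter] at hS
    exact joinAt_splitAt (mem_pathSubsets_s8.1 hS.1).2 hS.2.2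
  · rintro p hp
    simp only [mem_coe, mem_filter, mem_product] at hp
    exact splitAt_joinAt (lt_pivot hp.1.1) (pos hp.1.2)

end Pivot

theorem card_filter_product_add_add_one_eq {α β : Type*} (s : Finset α) (t : Finset β)
    (f : α → ℕ) (g : β → ℕ) (k : ℕ) :
    ((s ×ˢ t).filter (fun p => f p.1 + g p.2 + 1 = k)).card =
      ∑ r ∈ range k, (s.filter (f · = r)).card * (t.filter (g · = k - 1 - r)).card := by
  rw [card_eq_sum_card_fiberwise (f := fun p => f p.1) (t := range k) fun p hp => by
    simp only [mem_coe, mem_filter, coe_range, Set.mem_Iio] at hp ⊢; omega]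
  refine sum_congr rfl fun r hr => ?_
  rw [← card_product, filter_filter]
  congr 1
  ext ⟨a, b⟩
  simp only [mem_filter, mem_product, mem_range] at hr ⊢
  grind

theorem stmt8 (n h k i : ℕ) (hi1 : 1 ≤ i) (hi2 : i ≤ n) :
    ((pathSubsets n h).filter (fun S => S.card = k ∧ i ∈ S)).card
      = ∑ r ∈ Finset.range k,
          pathCount ((i : ℤ) - h - 1).toNat h r *
          pathCount ((n : ℤ) - i - h).toNat h (k - 1 - r) := by
  have hleft : ((i : ℤ) - h - 1).toNat = i - h - 1 := by omega
  have hright : ((n : ℤ) - i - h).toNat = n - i - h := by omega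
  rw [hleft, hright, card_pathSubsets_containing_eq_card_pairs hi1 hi2]
  exact card_filter_product_add_add_one_eq _ _ _ _ k
end

section
/- The number of independent subsets of the h-th power of a path on n vertices that contain a fixed vertex i equals p̄(i-h-1) * p̄(n-h-i), where p̄(m) is the total number of independent subsets of the h-th power of a path on max(m,0) vertices. -/
/-!
An `h`-spread set `S` containing `i` splits into its elements below `i`, all of which are
`≤ i - h - 1`, and its elements above `i`, all of which are `≥ i + h + 1`; conversely, `i`
together with any spread set in each of these two ranges is spread. The upper range is the
translate of `[1, n - h - i]` by `i + h`, and spreadness is translation invariant.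
-/

open Finset

def Spread (h : ℕ) (S : Finset ℕ) : Prop := ∀ a ∈ S, ∀ b ∈ S, a < b → a + h < b

instance (h : ℕ) : DecidablePred (Spread h) := fun S =>
  inferInstanceAs (Decidable (∀ a ∈ S, ∀ b ∈ S, a < b → a + h < b))

def spreadSubsets (s : Finset ℕ) (h : ℕ) : Finset (Finset ℕ) := s.powerset.filter (Spread h)

lemma pathSubsets_eq_spreadSubsets (n h : ℕ) : pathSubsets n h = spreadSubsets (Icc 1 n) h := rfl

@[simp]
lemma mem_spreadSubsets {s S : Finset ℕ} {h : ℕ} :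
    S ∈ spreadSubsets s h ↔ S ⊆ s ∧ Spread h S := by
  rw [spreadSubsets, mem_filter, mem_powerset]

namespace Spread

variable {h i : ℕ} {S : Finset ℕ}

lemma mono {T : Finset ℕ} (hS : Spread h S) (hT : T ⊆ S) : Spread h T :=
  fun a ha b hb hab => hS a (hT ha) b (hT hb) hab

lemma insert_union {A B : Finset ℕ} (hA : Spread h A) (hB : Spread h B)
    (hAi : ∀ a ∈ A, a + h < i) (hBi : ∀ b ∈ B, i + h < b) : Spread h (insert i (A ∪ B)) := by
  intro a ha b hb hab
  simp only [mem_insert, mem_union] at ha hb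
  rcases ha with ha | ha | ha <;> rcases hb with hb | hb | hb
  · omega
  · have := hAi b hb; omega
  · have := hBi b hb; omega
  · have := hAi a ha; omega
  · exact hA a ha b hb hab
  · have := hAi a ha; have := hBi b hb; omega
  · have := hBi a ha; omega
  · have := hBi a ha; have := hAi b hb; omega
  · exact hB a ha b hb hab

lemma map_add_iff {c : ℕ} : Spread h (S.map (addRightEmbedding c)) ↔ Spread h S := by
  simp only [Spread, mem_map, addRightEmbedding_apply, forall_exists_index, and_imp,
    forall_apply_eq_imp_iff₂]
  refine forall₂_congr fun a _ => forall₂_congr fun b _ => ?_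
  omega

end Spread

lemma spreadSubsets_map_add (s : Finset ℕ) (h c : ℕ) :
    spreadSubsets (s.map (addRightEmbedding c)) h
      = (spreadSubsets s h).map (mapEmbedding (addRightEmbedding c)).toEmbedding := by
  ext T
  simp only [mem_spreadSubsets, mem_map, subset_map_iff, RelEmbedding.coe_toEmbedding,
    mapEmbedding_apply]
  constructor
  · rintro ⟨⟨u, hu, rfl⟩, hT⟩
    exact ⟨u, ⟨hu, Spread.map_add_iff.1 hT⟩, rfl⟩
  · rintro ⟨u, ⟨hu, hT⟩, rfl⟩
    exact ⟨⟨u, hu, rfl⟩, Spread.map_add_iff.2 hT⟩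

lemma card_spreadSubsets_map_add (s : Finset ℕ) (h c : ℕ) :
    #(spreadSubsets (s.map (addRightEmbedding c)) h) = #(spreadSubsets s h) := by
  rw [spreadSubsets_map_add, card_map]

lemma card_filter_mem_spreadSubsets {s : Finset ℕ} {h i : ℕ} (hi : i ∈ s) :
    #{S ∈ spreadSubsets s h | i ∈ S}
      = #(spreadSubsets {x ∈ s | x + h < i} h) * #(spreadSubsets {x ∈ s | i + h < x} h) := by
  rw [← card_product]
  refine card_nbij' (fun S => ({x ∈ S | x < i}, {x ∈ S | i < x}))
    (fun p => insert i (p.1 ∪ p.2)) ?_ ?_ ?_ ?_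
  · rintro S hS
    simp only [mem_coe, mem_filter, mem_spreadSubsets] at hS
    obtain ⟨⟨hSs, hS⟩, hiS⟩ := hS
    simp only [coe_product, Set.mem_prod, mem_coe, mem_spreadSubsets]
    refine ⟨⟨fun x hx => ?_, hS.mono (filter_subset _ _)⟩,
      ⟨fun x hx => ?_, hS.mono (filter_subset _ _)⟩⟩ <;> rw [mem_filter] at hx ⊢
    · exact ⟨hSs hx.1, hS x hx.1 i hiS hx.2⟩
    · exact ⟨hSs hx.1, hS i hiS x hx.1 hx.2⟩
  · rintro ⟨A, B⟩ hAB
    simp only [coe_product, Set.mem_prod, mem_coe, mem_spreadSubsets, subset_iff,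
      mem_filter] at hAB
    obtain ⟨⟨hAs, hA⟩, hBs, hB⟩ := hAB
    simp only [mem_coe, mem_filter, mem_spreadSubsets, mem_insert_self, and_true]
    refine ⟨insert_subset hi (union_subset (fun x hx => (hAs hx).1) (fun x hx => (hBs hx).1)),
      hA.insert_union hB (fun x hx => (hAs hx).2) (fun x hx => (hBs hx).2)⟩
  · rintro S hS
    simp only [mem_coe, mem_filter] at hS
    ext x
    simp only [mem_insert, mem_union, mem_filter]
    grind
  · rintro ⟨A, B⟩ hAB
    simp only [coe_product, Set.mem_prod, mem_coe, mem_spreadSubsets, subset_iff,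
      mem_filter] at hAB
    obtain ⟨⟨hAs, -⟩, hBs, -⟩ := hAB
    ext x <;> simp only [mem_filter, mem_insert, mem_union] <;> grind

theorem stmt9 (n h i : ℕ) (hi1 : 1 ≤ i) (hi2 : i ≤ n) :
    ((pathSubsets n h).filter (fun S => i ∈ S)).card
      = pathTotal ((i : ℤ) - h - 1).toNat h * pathTotal ((n : ℤ) - h - i).toNat h := by
  have hlower : {x ∈ Icc 1 n | x + h < i} = Icc 1 ((i : ℤ) - h - 1).toNat := by
    ext x; simp only [mem_filter, mem_Icc]; omega
  have hupper : {x ∈ Icc 1 n | i + h < x}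
      = (Icc 1 ((n : ℤ) - h - i).toNat).map (addRightEmbedding (i + h)) := by
    ext x
    simp only [mem_filter, mem_Icc, mem_map, addRightEmbedding_apply]
    constructor
    · intro hx; exact ⟨x - (i + h), by omega, by omega⟩
    · rintro ⟨y, hy, rfl⟩; omega
  simp only [pathTotal, pathSubsets_eq_spreadSubsets]
  rw [card_filter_mem_spreadSubsets (mem_Icc.2 ⟨hi1, hi2⟩), hlower, hupper,
    card_spreadSubsets_map_add]
end
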